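/- For quadratic forms over a field $k$ of characteristic not $2$: if the Pfister neighbor $\varphi = \langle\langle a_1, \ldots, a_{n-1}\rangle\rangle \perp \langle -a_n \rangle$ is isotropic over a field extension $F/k$, then the Pfister form $\langle\langle a_1, \ldots, a_n\rangle\rangle$ is hyperbolic over $F$, and conversely. -/

import Mathlib

/-- The `n`-fold Pfister form `⟨⟨a₁, …, aₙ⟩⟩ = ⊗ᵢ ⟨1, -aᵢ⟩` as a quadratic polynomial
function on the `2^n`-dimensional space `(Fin n → Bool) → k`, defined recursively by
`⟨⟨⟩⟩(x) = x²` and `⟨⟨a₀,…,aₙ⟩⟩ = ⟨⟨a₁,…,aₙ⟩⟩ ⊥ (-a₀)·⟨⟨a₁,…,aₙ⟩⟩`. -/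
def pfisterForm (k : Type*) [Field k] : ∀ n : ℕ, (Fin n → k) → ((Fin n → Bool) → k) → k
  | 0, _, x => (x (fun i => i.elim0)) ^ 2
  | n + 1, a, x =>
      pfisterForm k n (fun i => a i.succ) (fun s => x (Fin.cons false s)) -
        a 0 * pfisterForm k n (fun i => a i.succ) (fun s => x (Fin.cons true s))

/-- The Pfister neighbor `φ = ⟨⟨a₁, …, aₙ⟩⟩ ⊥ ⟨-a_{n+1}⟩` as a function on
`((Fin n → Bool) → k) × k`. -/
def pfisterNeighbor (k : Type*) [Field k] (n : ℕ) (a : Fin (n + 1) → k)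
    (x : ((Fin n → Bool) → k) × k) : k :=
  pfisterForm k n (fun i => a i.castSucc) x.1 - a (Fin.last n) * x.2 ^ 2
/-!
Write `φ = ⟨⟨a₁, …, aₙ⟩⟩` and `b = a_{n+1}`, so that the Pfister form is `φ ⊥ -bφ`. Since `φ`
represents `1`, say at `e`, the neighbor `φ ⊥ ⟨-b⟩` embeds isometrically into `φ ⊥ -bφ` by
`(y, t) ↦ (y, t e)`. A totally isotropic subspace of dimension `2ⁿ` therefore meets the
`(2ⁿ + 1)`-dimensional image of the neighbor, which gives an isotropic vector of the neighbor.

Conversely an isotropic neighbor makes the Pfister form isotropic, and isotropic Pfister forms are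
hyperbolic because Pfister forms are round: every nonzero value is a similarity factor. Roundness
passes from `φ` to `φ ⊥ -bφ` because the shear `(x, y) ↦ (x + f y, x + y)` scales `φ ⊥ -fφ` by
`1 - f`. If `φ` is anisotropic and `φ(u) = b φ(v)` with `(u, v) ≠ 0`, then `b` is a similarity
factor of `φ` and the graph of a similarity with factor `b` is totally isotropic; if `φ` is
isotropic, a totally isotropic subspace `W` of `φ` gives `W × W` for `φ ⊥ -bφ`.
-/

open Module QuadraticMap

section

variable {F : Type*} [Field F]

section SimilarityFactor

variable {V V' : Type*} [AddCommGroup V] [Module F V] [AddCommGroup V'] [Module F V']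

def IsSimilarityFactor (Q : QuadraticForm F V) (c : F) : Prop :=
  ∃ e : V ≃ₗ[F] V, ∀ x, Q (e x) = c * Q x

def IsRound (Q : QuadraticForm F V) : Prop :=
  ∀ x, Q x ≠ 0 → IsSimilarityFactor Q (Q x)

namespace IsSimilarityFactor

variable {Q : QuadraticForm F V} {c d : F}

theorem mul (hc : IsSimilarityFactor Q c) (hd : IsSimilarityFactor Q d) :
    IsSimilarityFactor Q (c * d) := by
  obtain ⟨e, he⟩ := hc
  obtain ⟨f, hf⟩ := hd
  exact ⟨f.trans e, fun x => by simp [he, hf, mul_assoc]⟩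

theorem inv (hc : IsSimilarityFactor Q c) : IsSimilarityFactor Q c⁻¹ := by
  obtain ⟨e, he⟩ := hc
  refine ⟨e.symm, fun x => ?_⟩
  have h := he (e.symm x)
  rw [e.apply_symm_apply] at h
  rcases eq_or_ne c 0 with rfl | hc
  · simpa using he (e.symm (e.symm x))
  · rw [h, inv_mul_cancel_left₀ hc]

theorem smul (hc : IsSimilarityFactor Q c) (d : F) : IsSimilarityFactor (d • Q) c := by
  obtain ⟨e, he⟩ := hc
  exact ⟨e, fun x => by simp [he, mul_left_comm]⟩

theorem prod {Q' : QuadraticForm F V'} (hc : IsSimilarityFactor Q c)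
    (hc' : IsSimilarityFactor Q' c) : IsSimilarityFactor (Q.prod Q') c := by
  obtain ⟨e, he⟩ := hc
  obtain ⟨e', he'⟩ := hc'
  exact ⟨e.prodCongr e', fun x => by simp [he, he', mul_add]⟩

theorem of_equivalent {Q' : QuadraticForm F V'} (h : Q.Equivalent Q')
    (hc : IsSimilarityFactor Q c) : IsSimilarityFactor Q' c := by
  obtain ⟨f⟩ := h
  obtain ⟨e, he⟩ := hc
  exact ⟨f.symm.toLinearEquiv.trans (e.trans f.toLinearEquiv), fun x => by simp [he]⟩

theorem equivalent_prod_neg_smul (hd : IsSimilarityFactor Q d) (b : F) :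
    (Q.prod (-(b * d) • Q)).Equivalent (Q.prod (-b • Q)) := by
  obtain ⟨e, he⟩ := hd
  exact ⟨(QuadraticMap.IsometryEquiv.refl Q).prod
    { e with map_app' := fun x => by simp [he, mul_assoc] }⟩

end IsSimilarityFactor

theorem IsRound.of_equivalent {Q : QuadraticForm F V} {Q' : QuadraticForm F V'} (hQ : IsRound Q)
    (h : Q.Equivalent Q') : IsRound Q' := by
  obtain ⟨f⟩ := h
  intro x hx
  rw [← f.symm.map_app] at hx ⊢
  exact (hQ _ hx).of_equivalent ⟨f⟩

theorem isSimilarityFactor_sq (Q : QuadraticForm F V) {t : F} (ht : t ≠ 0) :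
    IsSimilarityFactor Q (t ^ 2) :=
  ⟨LinearEquiv.smulOfNeZero F V t ht, fun x => by simp [QuadraticMap.map_smul, pow_two]⟩

theorem isSimilarityFactor_prod_neg_smul_neg (Q : QuadraticForm F V) {b : F} (hb : b ≠ 0) :
    IsSimilarityFactor (Q.prod (-b • Q)) (-b) := by
  refine ⟨(LinearEquiv.prodComm F V V).trans
    ((LinearEquiv.smulOfNeZero F V b hb).prodCongr (LinearEquiv.refl F V)), fun x => ?_⟩
  simp [QuadraticMap.map_smul]
  ring

theorem QuadraticMap.map_add_smul_sub_mul_map_add (Q : QuadraticForm F V) (f : F) (x y : V) :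
    Q (x + f • y) - f * Q (x + y) = (1 - f) * (Q x - f * Q y) := by
  rw [QuadraticMap.map_add Q, QuadraticMap.map_add Q, QuadraticMap.map_smul, polar_smul_right,
    smul_eq_mul, smul_eq_mul]
  ring

def shearEquiv {f : F} (hf : f ≠ 1) : (V × V) ≃ₗ[F] V × V where
  toFun p := (p.1 + f • p.2, p.1 + p.2)
  invFun p := (p.2 - (f - 1)⁻¹ • (p.1 - p.2), (f - 1)⁻¹ • (p.1 - p.2))
  map_add' p q := by ext <;> simp <;> abel
  map_smul' c p := by ext <;> simp [smul_add, smul_comm c f]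
  left_inv p := by
    have : f - 1 ≠ 0 := sub_ne_zero.mpr hf
    ext <;> dsimp <;> match_scalars <;> field_simp <;> ring
  right_inv p := by
    have : f - 1 ≠ 0 := sub_ne_zero.mpr hf
    ext <;> dsimp <;> match_scalars <;> field_simp <;> ring

theorem isSimilarityFactor_prod_neg_smul_one_sub (Q : QuadraticForm F V) {f : F} (hf : f ≠ 1) :
    IsSimilarityFactor (Q.prod (-f • Q)) (1 - f) := by
  refine ⟨shearEquiv hf, fun p => ?_⟩
  simpa [shearEquiv, ← sub_eq_add_neg, neg_mul] using Q.map_add_smul_sub_mul_map_add f p.1 p.2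

theorem IsRound.prod_neg_smul {Q : QuadraticForm F V} (hQ : IsRound Q) (b : F) :
    IsRound (Q.prod (-b • Q)) := by
  have lift {d : F} (hd : IsSimilarityFactor Q d) : IsSimilarityFactor (Q.prod (-b • Q)) d :=
    hd.prod (hd.smul _)
  rintro ⟨u, v⟩ hc
  have hval : (Q.prod (-b • Q)) (u, v) = Q u - b * Q v := by simp [sub_eq_add_neg]
  rw [hval] at hc ⊢
  by_cases hv : Q v = 0
  · rw [hv, mul_zero, sub_zero] at hc ⊢
    exact lift (hQ u hc)
  by_cases hu : Q u = 0
  · have hb : b ≠ 0 := by rintro rfl; simp [hu] at hc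
    rw [hu, zero_sub, ← neg_mul]
    exact (isSimilarityFactor_prod_neg_smul_neg Q hb).mul (lift (hQ v hv))
  · -- `Q ⊥ -bQ ≅ Q ⊥ -(b d)Q` for the similarity factor `d = Q v / Q u`, and the shear
    -- scales the latter by `1 - b d`
    have hd : IsSimilarityFactor Q (Q v / Q u) := by
      simpa only [div_eq_mul_inv] using (hQ v hv).mul (hQ u hu).inv
    have hsplit : Q u - b * Q v = Q u * (1 - b * (Q v / Q u)) := by field_simp
    have hbd : b * (Q v / Q u) ≠ 1 := by
      intro h; rw [hsplit, h, sub_self, mul_zero] at hc; exact hc rfl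
    rw [hsplit]
    exact (lift (hQ u hu)).mul (((isSimilarityFactor_prod_neg_smul_one_sub Q hbd).of_equivalent
      (hd.equivalent_prod_neg_smul b)))

end SimilarityFactor

section TotallyIsotropic

variable {V V' : Type*} [AddCommGroup V] [Module F V] [AddCommGroup V'] [Module F V']

def HasTotallyIsotropicSubspace (Q : QuadraticForm F V) (r : ℕ) : Prop :=
  ∃ W : Submodule F V, finrank F W = r ∧ ∀ w ∈ W, Q w = 0

theorem HasTotallyIsotropicSubspace.of_equivalent {Q : QuadraticForm F V}
    {Q' : QuadraticForm F V'} {r : ℕ} (h : Q.Equivalent Q') (hQ : HasTotallyIsotropicSubspace Q r) :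
    HasTotallyIsotropicSubspace Q' r := by
  obtain ⟨f⟩ := h
  obtain ⟨W, hW, hWQ⟩ := hQ
  refine ⟨W.map (f.toLinearEquiv : V →ₗ[F] V'), by rw [LinearEquiv.finrank_map_eq, hW], ?_⟩
  rintro _ ⟨w, hw, rfl⟩
  simpa using hWQ w hw

theorem HasTotallyIsotropicSubspace.prod_smul [FiniteDimensional F V] {Q : QuadraticForm F V}
    {r : ℕ} (hQ : HasTotallyIsotropicSubspace Q r) (b : F) :
    HasTotallyIsotropicSubspace (Q.prod (b • Q)) (2 * r) := by
  obtain ⟨W, hW, hWQ⟩ := hQ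
  let g : W × W →ₗ[F] V × V := W.subtype.prodMap W.subtype
  have hg : Function.Injective g :=
    Prod.map_injective.mpr ⟨W.injective_subtype, W.injective_subtype⟩
  refine ⟨LinearMap.range g, ?_, ?_⟩
  · rw [LinearMap.finrank_range_of_inj hg, Module.finrank_prod, hW, two_mul]
  · rintro _ ⟨⟨x, y⟩, rfl⟩
    simp [g, hWQ x x.2, hWQ y y.2]

theorem QuadraticMap.Anisotropic.of_isometryEquiv {Q : QuadraticForm F V}
    {Q' : QuadraticForm F V'} (f : Q.IsometryEquiv Q') (h : Q'.Anisotropic) : Q.Anisotropic :=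
  fun x hx => (map_eq_zero_iff f f.injective).mp (h _ (by rwa [f.map_app]))

theorem hasTotallyIsotropicSubspace_prod_neg_smul {Q : QuadraticForm F V} (hQ : IsRound Q)
    (hani : Q.Anisotropic) {b : F} (hb : b ≠ 0) (hiso : ¬ (Q.prod (-b • Q)).Anisotropic) :
    HasTotallyIsotropicSubspace (Q.prod (-b • Q)) (finrank F V) := by
  obtain ⟨⟨u, v⟩, huv, hzero⟩ := (not_anisotropic_iff_exists _).mp hiso
  have hrel : Q u = b * Q v := by
    simp only [prod_apply, smul_apply, smul_eq_mul] at hzero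
    linear_combination hzero
  have hv : Q v ≠ 0 := by
    intro hv
    have hu := hani u (by rw [hrel, hv, mul_zero])
    exact huv (by rw [hu, hani v hv]; rfl)
  have hu : Q u ≠ 0 := by rw [hrel]; exact mul_ne_zero hb hv
  obtain ⟨e, he⟩ : IsSimilarityFactor Q b := by
    convert (hQ u hu).mul (hQ v hv).inv using 1
    field_simp
    exact hrel.symm
  let g : V →ₗ[F] V × V := e.toLinearMap.prod LinearMap.id
  have hg : Function.Injective g := fun x y h => congrArg Prod.snd h
  refine ⟨LinearMap.range g, LinearMap.finrank_range_of_inj hg, ?_⟩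
  rintro _ ⟨z, rfl⟩
  simp [g, he]

theorem Submodule.exists_ne_zero_apply_mem [FiniteDimensional F V] [FiniteDimensional F V']
    (W : Submodule F V) (j : V' →ₗ[F] V) (h : finrank F V < finrank F W + finrank F V') :
    ∃ x ≠ 0, j x ∈ W := by
  have hlt : finrank F (V ⧸ W) < finrank F V' := by
    rw [W.finrank_quotient]
    have := W.finrank_le
    omega
  obtain ⟨x, hx, hx0⟩ := Submodule.exists_mem_ne_zero_of_ne_bot
    (LinearMap.ker_ne_bot_of_finrank_lt (f := W.mkQ ∘ₗ j) hlt)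
  exact ⟨x, hx0, by simpa using hx⟩

end TotallyIsotropic

section Pfister

def pfisterCoeff {n : ℕ} (a : Fin n → F) (s : Fin n → Bool) : F :=
  ∏ i, if s i then -a i else 1

def pfisterQuadraticForm {n : ℕ} (a : Fin n → F) : QuadraticForm F ((Fin n → Bool) → F) :=
  weightedSumSquares F (pfisterCoeff a)

theorem pfisterQuadraticForm_apply {n : ℕ} (a : Fin n → F) (x : (Fin n → Bool) → F) :
    pfisterQuadraticForm a x = ∑ s, pfisterCoeff a s * x s ^ 2 := by
  simp [pfisterQuadraticForm, weightedSumSquares_apply, pow_two]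

theorem coe_pfisterQuadraticForm :
    ∀ {n : ℕ} (a : Fin n → F), ⇑(pfisterQuadraticForm a) = pfisterForm F n a
  | 0, a => funext fun x => by
    rw [pfisterQuadraticForm_apply, Fintype.sum_unique]
    simp [pfisterForm, pfisterCoeff, Subsingleton.elim default fun i : Fin 0 => i.elim0]
  | n + 1, a => funext fun x => by
    rw [pfisterForm, ← coe_pfisterQuadraticForm,
      pfisterQuadraticForm_apply, pfisterQuadraticForm_apply, pfisterQuadraticForm_apply,
      ← (Fin.consEquiv fun _ => Bool).sum_comp, Fintype.sum_prod_type, Fintype.sum_bool]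
    simp [Fin.consEquiv, pfisterCoeff, Fin.prod_univ_succ, Finset.mul_sum, sub_eq_add_neg,
      add_comm]
    exact Finset.sum_congr rfl fun s _ => by ring

theorem pfisterQuadraticForm_snoc {n : ℕ} (a : Fin (n + 1) → F)
    (x : (Fin (n + 1) → Bool) → F) :
    pfisterQuadraticForm a x =
      pfisterQuadraticForm (Fin.init a) (fun s => x (Fin.snoc s false)) -
        a (Fin.last n) * pfisterQuadraticForm (Fin.init a) (fun s => x (Fin.snoc s true)) := by
  rw [pfisterQuadraticForm_apply, pfisterQuadraticForm_apply, pfisterQuadraticForm_apply,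
    ← (Fin.snocEquiv fun _ => Bool).sum_comp, Fintype.sum_prod_type, Fintype.sum_bool]
  simp [Fin.snocEquiv, pfisterCoeff, Fin.prod_univ_castSucc, Finset.mul_sum, sub_eq_add_neg,
    Fin.init, add_comm]
  exact Finset.sum_congr rfl fun s _ => by ring

/-- `x ↦ (fun s => x (Fin.snoc s false), fun s => x (Fin.snoc s true))`. -/
def pfisterSplit (n : ℕ) :
    ((Fin (n + 1) → Bool) → F) ≃ₗ[F] ((Fin n → Bool) → F) × ((Fin n → Bool) → F) :=
  (LinearEquiv.funCongrLeft F F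
    ((Equiv.boolProdEquivSum _).symm.trans (Fin.snocEquiv fun _ => Bool))).trans
    (LinearEquiv.sumArrowLequivProdArrow _ _ F F)

def pfisterIsometryEquiv {n : ℕ} (a : Fin (n + 1) → F) :
    (pfisterQuadraticForm a).IsometryEquiv ((pfisterQuadraticForm (Fin.init a)).prod
      (-a (Fin.last n) • pfisterQuadraticForm (Fin.init a))) where
  toLinearEquiv := pfisterSplit n
  map_app' x := by
    rw [pfisterQuadraticForm_snoc]
    simp [sub_eq_add_neg]
    rfl

theorem pfisterQuadraticForm_single_false {n : ℕ} (a : Fin n → F) :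
    pfisterQuadraticForm a (Pi.single (fun _ => false) 1) = 1 := by
  rw [pfisterQuadraticForm_apply, Finset.sum_eq_single (fun _ => false)] <;>
    simp_all [pfisterCoeff]

theorem anisotropic_pfisterQuadraticForm_zero (a : Fin 0 → F) :
    (pfisterQuadraticForm a).Anisotropic := by
  intro x hx
  rw [coe_pfisterQuadraticForm, pfisterForm, sq_eq_zero_iff] at hx
  exact funext fun s => by rwa [Subsingleton.elim s fun i => i.elim0]

theorem isRound_pfisterQuadraticForm :
    ∀ {n : ℕ} (a : Fin n → F), IsRound (pfisterQuadraticForm a)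
  | 0, a => fun x hx => by
    rw [coe_pfisterQuadraticForm, pfisterForm] at hx ⊢
    exact isSimilarityFactor_sq _ ((pow_ne_zero_iff two_ne_zero).mp hx)
  | _ + 1, a => ((isRound_pfisterQuadraticForm (Fin.init a)).prod_neg_smul _).of_equivalent
      ⟨(pfisterIsometryEquiv a).symm⟩

theorem hasTotallyIsotropicSubspace_pfisterQuadraticForm {n : ℕ} (a : Fin (n + 1) → F)
    (ha : ∀ i, a i ≠ 0) (hiso : ¬ (pfisterQuadraticForm a).Anisotropic) :
    HasTotallyIsotropicSubspace (pfisterQuadraticForm a) (2 ^ n) := by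
  refine .of_equivalent ⟨(pfisterIsometryEquiv a).symm⟩ ?_
  have hiso' := mt (Anisotropic.of_isometryEquiv (pfisterIsometryEquiv a)) hiso
  by_cases hP : (pfisterQuadraticForm (Fin.init a)).Anisotropic
  · simpa using
      hasTotallyIsotropicSubspace_prod_neg_smul (isRound_pfisterQuadraticForm _) hP (ha _) hiso'
  · obtain ⟨m, rfl⟩ : ∃ m, n = m + 1 := Nat.exists_eq_succ_of_ne_zero
      (by rintro rfl; exact hP (anisotropic_pfisterQuadraticForm_zero _))
    rw [pow_succ']
    exact (hasTotallyIsotropicSubspace_pfisterQuadraticForm _ (fun i => ha _) hP).prod_smul _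

def pfisterNeighborEmbedding (n : ℕ) :
    ((Fin n → Bool) → F) × F →ₗ[F] (Fin (n + 1) → Bool) → F :=
  (pfisterSplit n).symm.toLinearMap ∘ₗ
    LinearMap.id.prodMap (LinearMap.toSpanSingleton F _ (Pi.single (fun _ => false) 1))

theorem pfisterNeighborEmbedding_injective (n : ℕ) :
    Function.Injective (pfisterNeighborEmbedding (F := F) n) := by
  have hsingle : (Pi.single (fun _ => false) 1 : (Fin n → Bool) → F) ≠ 0 := by simp
  exact (pfisterSplit n).symm.injective.comp
    (Prod.map_injective.mpr ⟨Function.injective_id, smul_left_injective F hsingle⟩)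

theorem pfisterForm_pfisterNeighborEmbedding {n : ℕ} (a : Fin (n + 1) → F)
    (x : ((Fin n → Bool) → F) × F) :
    pfisterForm F (n + 1) a (pfisterNeighborEmbedding n x) = pfisterNeighbor F n a x := by
  have hsplit : pfisterIsometryEquiv a (pfisterNeighborEmbedding n x) =
      (x.1, x.2 • Pi.single (fun _ => false) 1) :=
    (pfisterSplit n).apply_symm_apply _
  rw [← coe_pfisterQuadraticForm, ← (pfisterIsometryEquiv a).map_app, hsplit, pfisterNeighbor,
    ← coe_pfisterQuadraticForm]
  simp [QuadraticMap.map_smul, pfisterQuadraticForm_single_false, sub_eq_add_neg, pow_two]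
  rfl

end Pfister

end

theorem pfisterNeighbor_isotropic_iff_pfister_hyperbolic_general
    (k F : Type*) [Field k] [Field F] [Algebra k F]
    (n : ℕ) (a : Fin (n + 1) → k) (ha : ∀ i, a i ≠ 0) :
    (∃ x : ((Fin n → Bool) → F) × F, x ≠ 0 ∧
        pfisterNeighbor F n (fun i => algebraMap k F (a i)) x = 0) ↔
      (∃ W : Submodule F ((Fin (n + 1) → Bool) → F),
        Module.finrank F W = 2 ^ n ∧
        ∀ w ∈ W, pfisterForm F (n + 1) (fun i => algebraMap k F (a i)) w = 0) := by
  set A : Fin (n + 1) → F := fun i => algebraMap k F (a i)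
  let j := pfisterNeighborEmbedding (F := F) n
  rw [← coe_pfisterQuadraticForm]
  change _ ↔ HasTotallyIsotropicSubspace (pfisterQuadraticForm A) (2 ^ n)
  constructor
  · rintro ⟨x, hx0, hx⟩
    refine hasTotallyIsotropicSubspace_pfisterQuadraticForm A (fun i => by simpa [A] using ha i) ?_
    rw [not_anisotropic_iff_exists]
    refine ⟨j x, (map_ne_zero_iff j (pfisterNeighborEmbedding_injective n)).mpr hx0, ?_⟩
    rwa [coe_pfisterQuadraticForm, pfisterForm_pfisterNeighborEmbedding]
  · rintro ⟨W, hW, hWQ⟩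
    obtain ⟨x, hx0, hxW⟩ := W.exists_ne_zero_apply_mem j (by simp [hW, pow_succ]; omega)
    refine ⟨x, hx0, ?_⟩
    rw [← pfisterForm_pfisterNeighborEmbedding, ← coe_pfisterQuadraticForm]
    exact hWQ _ hxW

/-- Over a field `F` of characteristic `≠ 2` extending `k`, the Pfister neighbor
`⟨⟨a₁,…,aₙ⟩⟩ ⊥ ⟨-a_{n+1}⟩` is isotropic iff the Pfister form `⟨⟨a₁,…,a_{n+1}⟩⟩` is
hyperbolic (possesses a totally isotropic subspace of half the dimension). -/
theorem pfisterNeighbor_isotropic_iff_pfister_hyperbolic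
    (k F : Type*) [Field k] [Field F] [Algebra k F] (hchar : (2 : k) ≠ 0)
    (n : ℕ) (a : Fin (n + 1) → k) (ha : ∀ i, a i ≠ 0) :
    (∃ x : ((Fin n → Bool) → F) × F, x ≠ 0 ∧
        pfisterNeighbor F n (fun i => algebraMap k F (a i)) x = 0) ↔
      (∃ W : Submodule F ((Fin (n + 1) → Bool) → F),
        Module.finrank F W = 2 ^ n ∧
        ∀ w ∈ W, pfisterForm F (n + 1) (fun i => algebraMap k F (a i)) w = 0) :=
  pfisterNeighbor_isotropic_iff_pfister_hyperbolic_general k F n a ha
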